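/- arXiv:1908.05528 — 7 statements merged into one kernel-verified Lean document; each statement's English description precedes it below -/
import Mathlib

section
/- Let (V, ⋆) be a K-algebra. The fusion ⊗ on subspaces (U ⊗ W := span{u ⋆ w | u ∈ U, w ∈ W}) is commutative, i.e., U ⊗ W = W ⊗ U for all subspaces U, W, if and only if V is pseudo-commutative: for all u, v ∈ V there exists α ∈ K with u ⋆ v = α • (v ⋆ u). -/
open Submodule

section

variable {R M N : Type*} [CommSemiring R] [AddCommMonoid M] [AddCommMonoid N]
  [Module R M] [Module R N]

def LinearMap.IsPseudoComm (f : M →ₗ[R] M →ₗ[R] N) : Prop :=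
  ∀ u v : M, ∃ α : R, f u v = α • f v u

theorem Submodule.map₂_span_singleton_span_singleton (f : M →ₗ[R] M →ₗ[R] N) (u v : M) :
    map₂ f (span R {u}) (span R {v}) = span R {f u v} := by
  rw [map₂_span_span, Set.image2_singleton]

theorem LinearMap.IsPseudoComm.map₂_le_map₂_swap {f : M →ₗ[R] M →ₗ[R] N} (hf : f.IsPseudoComm)
    (p q : Submodule R M) : map₂ f p q ≤ map₂ f q p :=
  map₂_le.2 fun u hu v hv => by
    obtain ⟨α, hα⟩ := hf u v
    exact hα ▸ smul_mem _ α (apply_mem_map₂ f hv hu)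

theorem LinearMap.IsPseudoComm.map₂_comm {f : M →ₗ[R] M →ₗ[R] N} (hf : f.IsPseudoComm)
    (p q : Submodule R M) : map₂ f p q = map₂ f q p :=
  le_antisymm (hf.map₂_le_map₂_swap p q) (hf.map₂_le_map₂_swap q p)

theorem LinearMap.isPseudoComm_of_map₂_comm {f : M →ₗ[R] M →ₗ[R] N}
    (hf : ∀ p q : Submodule R M, map₂ f p q = map₂ f q p) : f.IsPseudoComm := by
  intro u v
  have huv : f u v ∈ span R {f v u} := by
    rw [← map₂_span_singleton_span_singleton, ← hf]
    exact apply_mem_map₂ f (mem_span_singleton_self u) (mem_span_singleton_self v)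
  obtain ⟨α, hα⟩ := mem_span_singleton.1 huv
  exact ⟨α, hα.symm⟩

theorem LinearMap.map₂_comm_iff_isPseudoComm (f : M →ₗ[R] M →ₗ[R] N) :
    (∀ p q : Submodule R M, map₂ f p q = map₂ f q p) ↔ f.IsPseudoComm :=
  ⟨isPseudoComm_of_map₂_comm, IsPseudoComm.map₂_comm⟩

end

/-- fusion is commutative iff the K-algebra is pseudo-commutative. -/
theorem fusion_comm_iff_pseudoComm {K V : Type*} [Field K] [AddCommGroup V] [Module K V]
    (star : V →ₗ[K] V →ₗ[K] V) :
    (∀ U W : Submodule K V,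
        Submodule.span K (Set.image2 (fun u w => star u w) (U : Set V) (W : Set V)) =
          Submodule.span K (Set.image2 (fun u w => star u w) (W : Set V) (U : Set V))) ↔
      (∀ u v : V, ∃ α : K, star u v = α • (star v u)) := by
  simp only [← map₂_eq_span_image2]
  exact star.map₂_comm_iff_isPseudoComm
end

section
/- Let (V, ⋆) be a K-algebra. The fusion ⊗ on subspaces is associative, i.e., (U ⊗ W) ⊗ Z = U ⊗ (W ⊗ Z) for all subspaces U, W, Z, if and only if V is pseudo-associative: for all u, v, w ∈ V there exist α, β ∈ K with (u ⋆ v) ⋆ w = α • (u ⋆ (v ⋆ w)) and u ⋆ (v ⋆ w) = β • ((u ⋆ v) ⋆ w). -/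
/-! Fusion is `Submodule.map₂ star`. If it is associative, applying it to three lines
`K u, K v, K w` shows that `(u ⋆ v) ⋆ w` and `u ⋆ (v ⋆ w)` span the same line, which is
pseudo-associativity. Conversely, `(U ⊗ W) ⊗ Z` is spanned by the products `(u ⋆ w) ⋆ z`, and
pseudo-associativity puts each of them in `U ⊗ (W ⊗ Z)`; symmetrically for the other inclusion. -/

namespace Submodule

variable {R M N P Q S T : Type*} [CommSemiring R]
  [AddCommMonoid M] [AddCommMonoid N] [AddCommMonoid P] [AddCommMonoid Q] [AddCommMonoid S]
  [AddCommMonoid T] [Module R M] [Module R N] [Module R P] [Module R Q] [Module R S] [Module R T]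

theorem span_singleton_eq_span_singleton_iff_exists_smul {x y : M} :
    span R {x} = span R {y} ↔ (∃ a : R, x = a • y) ∧ ∃ b : R, y = b • x := by
  simp only [le_antisymm_iff, span_singleton_le_iff_mem, mem_span_singleton, eq_comm (a := x),
    eq_comm (a := y)]

theorem map₂_span_singleton_span_singleton_s6 (f : M →ₗ[R] N →ₗ[R] P) (m : M) (n : N) :
    map₂ f (span R {m}) (span R {n}) = span R {f m n} := by
  rw [map₂_span_span, Set.image2_singleton]

theorem map₂_map₂_left_le_iff (f : P →ₗ[R] Q →ₗ[R] T) (g : M →ₗ[R] N →ₗ[R] P)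
    {A : Submodule R M} {B : Submodule R N} {C : Submodule R Q} {D : Submodule R T} :
    map₂ f (map₂ g A B) C ≤ D ↔ ∀ a ∈ A, ∀ b ∈ B, ∀ c ∈ C, f (g a b) c ∈ D := by
  refine ⟨fun h a ha b hb c hc => h (apply_mem_map₂ f (apply_mem_map₂ g ha hb) hc),
    fun h => map₂_le.2 fun p hp c hc => ?_⟩
  have hAB : map₂ g A B ≤ comap (f.flip c) D := map₂_le.2 fun a ha b hb => h a ha b hb c hc
  exact hAB hp

theorem map₂_map₂_right_le_iff (f : M →ₗ[R] S →ₗ[R] T) (g : N →ₗ[R] Q →ₗ[R] S)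
    {A : Submodule R M} {B : Submodule R N} {C : Submodule R Q} {D : Submodule R T} :
    map₂ f A (map₂ g B C) ≤ D ↔ ∀ a ∈ A, ∀ b ∈ B, ∀ c ∈ C, f a (g b c) ∈ D := by
  refine ⟨fun h a ha b hb c hc => h (apply_mem_map₂ f ha (apply_mem_map₂ g hb hc)),
    fun h => map₂_le.2 fun a ha p hp => ?_⟩
  have hBC : map₂ g B C ≤ comap (f a) D := map₂_le.2 fun b hb c hc => h a ha b hb c hc
  exact hBC hp

end Submodule

open Submodule

/-- fusion is associative iff the K-algebra is pseudo-associative. -/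
theorem fusion_assoc_iff_pseudoAssoc {K V : Type*} [Field K] [AddCommGroup V] [Module K V]
    (star : V →ₗ[K] V →ₗ[K] V) :
    (∀ U W Z : Submodule K V,
        Submodule.span K (Set.image2 (fun u w => star u w)
          ((Submodule.span K (Set.image2 (fun u w => star u w) (U : Set V) (W : Set V))) : Set V)
          (Z : Set V)) =
        Submodule.span K (Set.image2 (fun u w => star u w) (U : Set V)
          ((Submodule.span K (Set.image2 (fun u w => star u w) (W : Set V) (Z : Set V))) : Set V))) ↔
      (∀ u v w : V,
        (∃ α : K, star (star u v) w = α • (star u (star v w))) ∧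
        (∃ β : K, star u (star v w) = β • (star (star u v) w))) := by
  simp only [← map₂_eq_span_image2]
  constructor
  · intro h u v w
    have hlines := h (span K {u}) (span K {v}) (span K {w})
    simp only [map₂_span_singleton_span_singleton_s6] at hlines
    exact span_singleton_eq_span_singleton_iff_exists_smul.1 hlines
  · intro h U W Z
    refine le_antisymm ((map₂_map₂_left_le_iff star star).2 fun u hu w hw z hz => ?_)
      ((map₂_map₂_right_le_iff star star).2 fun u hu w hw z hz => ?_)
    · obtain ⟨α, hα⟩ := (h u w z).1
      exact hα ▸ smul_mem _ α (apply_mem_map₂ star hu (apply_mem_map₂ star hw hz))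
    · obtain ⟨β, hβ⟩ := (h u w z).2
      exact hβ ▸ smul_mem _ β (apply_mem_map₂ star (apply_mem_map₂ star hu hw) hz)
end

section
/- Let (V, ⋆) be a K-algebra. Every subspace U satisfies U ⊗ U ⊆ U (expansivity of the fusion on subspaces) if and only if V is pseudo-expansive: for all u, v ∈ V there exist α, β ∈ K with u ⋆ v = α • u + β • v. -/
open Submodule

section

variable {R M : Type*} [Semiring R] [AddCommMonoid M] [Module R M]

theorem Submodule.span_image2_le_iff (f : M → M → M) (U : Submodule R M) :
    span R (Set.image2 f U U) ≤ U ↔ ∀ u ∈ U, ∀ w ∈ U, f u w ∈ U := by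
  rw [span_le, Set.image2_subset_iff]
  rfl

theorem forall_submodule_closed_iff_mem_span_pair (f : M → M → M) :
    (∀ U : Submodule R M, ∀ u ∈ U, ∀ w ∈ U, f u w ∈ U) ↔
      ∀ u w : M, f u w ∈ span R {u, w} := by
  refine ⟨fun h u w => h _ u (subset_span (by simp)) w (subset_span (by simp)), ?_⟩
  intro h U u hu w hw
  exact span_le.2 (Set.pair_subset hu hw) (h u w)

end

/-- fusion is expansive iff the K-algebra is pseudo-expansive. -/
theorem fusion_expansive_iff_pseudoExpansive {K V : Type*} [Field K] [AddCommGroup V] [Module K V]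
    (star : V →ₗ[K] V →ₗ[K] V) :
    (∀ U : Submodule K V,
        Submodule.span K (Set.image2 (fun u w => star u w) (U : Set V) (U : Set V)) ≤ U) ↔
      (∀ u v : V, ∃ α β : K, star u v = α • u + β • v) := by
  simp_rw [Submodule.span_image2_le_iff, forall_submodule_closed_iff_mem_span_pair,
    mem_span_pair, eq_comm]
end

section
/- Let V be a vector space over K and R ⊆ V × V a relation satisfying: (L2R) whenever t R (α•u + β•v) there exist scalars λ, μ and vectors z, w with z R u, w R v, and λ•z + μ•w = t; and (L3R) x R 0 iff x = 0. Define ◇X := {v | ∃ u ∈ X, v R u} for X ⊆ V. Then span is a ◇-nucleus: ◇(span X) ⊆ span(◇X) for every X ⊆ V. -/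
/-!
The sets `Y` with `◇Y ⊆ P` for a fixed subspace `P` are exactly the subsets of
`{u | ∀ v, R v u → v ∈ P}`, and (L2R), (L3R) make this set a subspace: (L3R) gives `0`,
(L2R) with coefficients `1, 1` gives sums and with `a, 0` gives scalar multiples.
Taking `P = span ◇X`, it contains `X`, hence `span X`.
-/

section

variable {K V : Type*} [Field K] [AddCommGroup V] [Module K V] (R : V → V → Prop)

def Submodule.relCore
    (L2R : ∀ (t u v : V) (α β : K), R t (α • u + β • v) →
      ∃ (l m : K) (z w : V), R z u ∧ R w v ∧ l • z + m • w = t)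
    (L3R : ∀ x : V, R x 0 ↔ x = 0) (P : Submodule K V) : Submodule K V where
  carrier := {u | ∀ v, R v u → v ∈ P}
  zero_mem' v hv := (L3R v).mp hv ▸ P.zero_mem
  add_mem' {x y} hx hy v hv := by
    obtain ⟨l, m, z, w, hz, hw, rfl⟩ := L2R v x y 1 1 (by simpa using hv)
    exact P.add_mem (P.smul_mem l (hx z hz)) (P.smul_mem m (hy w hw))
  smul_mem' a x hx v hv := by
    obtain ⟨l, m, z, w, hz, hw, rfl⟩ := L2R v x x a 0 (by simpa using hv)
    exact P.add_mem (P.smul_mem l (hx z hz)) (P.smul_mem m (hx w hw))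

end

/-- span is a ◇-nucleus for a relation satisfying (L2R) and (L3R). -/
theorem span_diamond_nucleus {K V : Type*} [Field K] [AddCommGroup V] [Module K V]
    (R : V → V → Prop)
    (L2R : ∀ (t u v : V) (α β : K), R t (α • u + β • v) →
      ∃ (l m : K) (z w : V), R z u ∧ R w v ∧ l • z + m • w = t)
    (L3R : ∀ x : V, R x 0 ↔ x = 0) :
    ∀ X : Set V,
      {v : V | ∃ u ∈ Submodule.span K X, R v u} ⊆
        (Submodule.span K {v : V | ∃ u ∈ X, R v u} : Set V) := by
  rintro X v ⟨u, hu, hvu⟩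
  have hX : X ⊆ Submodule.relCore R L2R L3R (Submodule.span K {v : V | ∃ u ∈ X, R v u}) :=
    fun x hx y hyx => Submodule.subset_span ⟨x, hx, hyx⟩
  exact Submodule.span_le.mpr hX hu v hvu
end

section
/- Let (V, ⋆, R) be a modal K-algebra (⋆ bilinear, R a linear relation satisfying L1R–L3R). The right-associativity inequality (U ⊗ W) ⊗ ◇Z ⊆ U ⊗ (W ⊗ ◇Z) holds for all subspaces U, W, Z if and only if V is pseudo right-associative: for all u, w, z, v ∈ V with v R z, there exist α, β ∈ K and v' ∈ V such that v' R (β • z) and (u ⋆ w) ⋆ v = α • (u ⋆ (w ⋆ v')). -/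
/-!
Both directions reduce to generators. If pseudo right-associativity holds, each generator
`(u ⋆ w) ⋆ v` of the left-hand side, with `v R z`, `z ∈ Z`, is a multiple of `u ⋆ (w ⋆ v')` with
`v' R β • z ∈ Z`, hence lies in the right-hand side. Conversely, take `U, W, Z` to be the lines
through `u, w, z`. Then the right-hand side is `u ⋆ (w ⋆ ◇(K z))`, and by (L1R) the set
`{v' | ∃ β, v' R β • z}` is already a subspace, so it is `◇(K z)`.
-/

open Submodule Set

section ModalAlgebra

variable {K V : Type*} [CommSemiring K] [AddCommMonoid V] [Module K V]

variable (K) in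
def diamond (R : V → V → Prop) (Z : Submodule K V) : Submodule K V :=
  span K {v | ∃ z ∈ Z, R v z}

def IsLinearRel (K : Type*) [Semiring K] [Module K V] (R : V → V → Prop) : Prop :=
  ∀ v u z w : V, R v u → R z w → ∀ γ δ : K, ∃ α β : K, R (γ • v + δ • z) (α • u + β • w)

def PseudoRightAssoc (star : V →ₗ[K] V →ₗ[K] V) (R : V → V → Prop) : Prop :=
  ∀ u w z v : V, R v z → ∃ (α β : K) (v' : V),
    R v' (β • z) ∧ star (star u w) v = α • star u (star w v')

theorem mem_diamond_iff {R : V → V → Prop} (hR : IsLinearRel K R) {Z : Submodule K V}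
    (hne : ∃ v, ∃ z ∈ Z, R v z) {x : V} :
    x ∈ diamond K R Z ↔ ∃ z ∈ Z, R x z := by
  refine ⟨fun hx => ?_, fun hx => subset_span hx⟩
  induction hx using span_induction with
  | mem y hy => exact hy
  | zero =>
    obtain ⟨v, z, hz, hvz⟩ := hne
    obtain ⟨α, β, h⟩ := hR v z v z hvz hvz 0 0
    exact ⟨α • z + β • z, Z.add_mem (Z.smul_mem α hz) (Z.smul_mem β hz), by simpa using h⟩
  | add y y' _ _ hy hy' =>
    obtain ⟨z, hz, hyz⟩ := hy
    obtain ⟨z', hz', hyz'⟩ := hy'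
    obtain ⟨α, β, h⟩ := hR y z y' z' hyz hyz' 1 1
    exact ⟨α • z + β • z', Z.add_mem (Z.smul_mem α hz) (Z.smul_mem β hz'), by simpa using h⟩
  | smul c y _ hy =>
    obtain ⟨z, hz, hyz⟩ := hy
    obtain ⟨α, β, h⟩ := hR y z y z hyz hyz c 0
    exact ⟨α • z + β • z, Z.add_mem (Z.smul_mem α hz) (Z.smul_mem β hz), by simpa using h⟩

theorem map₂_map₂_diamond_le_of_pseudoRightAssoc {star : V →ₗ[K] V →ₗ[K] V}
    {R : V → V → Prop} (h : PseudoRightAssoc star R) (U W Z : Submodule K V) :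
    map₂ star (map₂ star U W) (diamond K R Z) ≤
      map₂ star U (map₂ star W (diamond K R Z)) := by
  rw [map₂_eq_span_image2 star U W, diamond, map₂_span_span, span_le]
  rintro _ ⟨_, ⟨u, hu, w, hw, rfl⟩, v, ⟨z, hz, hvz⟩, rfl⟩
  obtain ⟨α, β, v', hv'z, heq⟩ := h u w z v hvz
  have hv' : v' ∈ diamond K R Z := subset_span ⟨β • z, Z.smul_mem β hz, hv'z⟩
  change star (star u w) v ∈ _
  rw [heq]
  exact smul_mem _ α (apply_mem_map₂ _ hu (apply_mem_map₂ _ hw hv'))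

theorem pseudoRightAssoc_of_map₂_map₂_diamond_le {star : V →ₗ[K] V →ₗ[K] V}
    {R : V → V → Prop} (hR : IsLinearRel K R)
    (h : ∀ U W Z : Submodule K V, map₂ star (map₂ star U W) (diamond K R Z) ≤
      map₂ star U (map₂ star W (diamond K R Z))) :
    PseudoRightAssoc star R := by
  intro u w z v hvz
  have hne : ∃ v, ∃ z' ∈ K ∙ z, R v z' := ⟨v, z, mem_span_singleton_self z, hvz⟩
  have hmem : star (star u w) v ∈ map₂ star (map₂ star (K ∙ u) (K ∙ w)) (diamond K R (K ∙ z)) :=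
    apply_mem_map₂ _ (apply_mem_map₂ _ (mem_span_singleton_self u) (mem_span_singleton_self w))
      ((mem_diamond_iff hR hne).2 ⟨z, mem_span_singleton_self z, hvz⟩)
  have hrhs := h _ _ _ hmem
  rw [map₂_span_singleton_eq_map, map₂_span_singleton_eq_map] at hrhs
  obtain ⟨_, ⟨v', hv', rfl⟩, heq⟩ := hrhs
  obtain ⟨_, hz', hv'z⟩ := (mem_diamond_iff hR hne).1 hv'
  obtain ⟨β, rfl⟩ := mem_span_singleton.1 hz'
  exact ⟨1, β, v', hv'z, by rw [one_smul, heq]⟩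

end ModalAlgebra

theorem rightAssoc_iff_pseudoRightAssoc_general {K V : Type*} [Field K] [AddCommGroup V] [Module K V]
    (star : V →ₗ[K] V →ₗ[K] V) (R : V → V → Prop)
    (L1R : ∀ (v u z w : V), R v u → R z w → ∀ γ δ : K,
      ∃ α β : K, R (γ • v + δ • z) (α • u + β • w)) :
    (∀ U W Z : Submodule K V,
        Submodule.span K (Set.image2 (fun a b => star a b)
          ((Submodule.span K (Set.image2 (fun a b => star a b) (U : Set V) (W : Set V))) : Set V)
          ((Submodule.span K {v : V | ∃ z ∈ Z, R v z}) : Set V)) ≤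
        Submodule.span K (Set.image2 (fun a b => star a b) (U : Set V)
          ((Submodule.span K (Set.image2 (fun a b => star a b) (W : Set V)
            ((Submodule.span K {v : V | ∃ z ∈ Z, R v z}) : Set V))) : Set V))) ↔
      (∀ u w z v : V, R v z → ∃ (α β : K) (v' : V),
        R v' (β • z) ∧ star (star u w) v = α • (star u (star w v'))) := by
  simp only [← map₂_eq_span_image2]
  exact ⟨pseudoRightAssoc_of_map₂_map₂_diamond_le L1R,
    map₂_map₂_diamond_le_of_pseudoRightAssoc⟩

/-- right-associativity of fusion w.r.t. ◇ on subspaces iff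
pseudo right-associativity of the modal K-algebra. -/
theorem rightAssoc_iff_pseudoRightAssoc {K V : Type*} [Field K] [AddCommGroup V] [Module K V]
    (star : V →ₗ[K] V →ₗ[K] V) (R : V → V → Prop)
    (L1R : ∀ (v u z w : V), R v u → R z w → ∀ γ δ : K,
      ∃ α β : K, R (γ • v + δ • z) (α • u + β • w))
    (L2R : ∀ (t u v : V) (α β : K), R t (α • u + β • v) →
      ∃ (l m : K) (z w : V), R z u ∧ R w v ∧ l • z + m • w = t)
    (L3R : ∀ x : V, R x 0 ↔ x = 0) :
    (∀ U W Z : Submodule K V,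
        Submodule.span K (Set.image2 (fun a b => star a b)
          ((Submodule.span K (Set.image2 (fun a b => star a b) (U : Set V) (W : Set V))) : Set V)
          ((Submodule.span K {v : V | ∃ z ∈ Z, R v z}) : Set V)) ≤
        Submodule.span K (Set.image2 (fun a b => star a b) (U : Set V)
          ((Submodule.span K (Set.image2 (fun a b => star a b) (W : Set V)
            ((Submodule.span K {v : V | ∃ z ∈ Z, R v z}) : Set V))) : Set V))) ↔
      (∀ u w z v : V, R v z → ∃ (α β : K) (v' : V),
        R v' (β • z) ∧ star (star u w) v = α • (star u (star w v'))) :=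
  rightAssoc_iff_pseudoRightAssoc_general star R L1R
end

section
/- Let (V, ⋆, R) be a modal K-algebra. The left-commutativity inequality (U ⊗ W) ⊗ ◇Z ⊆ (U ⊗ ◇Z) ⊗ W holds for all subspaces U, W, Z if and only if V is pseudo left-commutative: for all u, w, z, v ∈ V with v R z, there exist α, β ∈ K and v' ∈ V such that v' R (β • z) and (u ⋆ w) ⋆ v = α • ((u ⋆ v') ⋆ w). -/
/-! Under (L1R) and (L3R) the set `{v | ∃ z ∈ Z, R v z}` is already a subspace, so `◇Z` has no
elements besides the `R`-predecessors of `Z`. Both sides of the inequality are then spanned by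
products of generators, and the inequality amounts to every `(u ⋆ w) ⋆ v` with `v R z` lying in
`(U ⊗ ◇Z) ⊗ W`. For one-dimensional `U`, `W`, `Z` that subspace is `{(u ⋆ v') ⋆ w | v' R β • z}`,
which gives pseudo left-commutativity (even with `α = 1`); conversely pseudo left-commutativity
places each such product in `(U ⊗ ◇Z) ⊗ W` directly. -/

namespace Submodule

variable {R M N P Q S : Type*} [CommSemiring R] [AddCommMonoid M] [AddCommMonoid N]
  [AddCommMonoid P] [AddCommMonoid Q] [AddCommMonoid S] [Module R M] [Module R N] [Module R P]
  [Module R Q] [Module R S]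

theorem map₂_map₂_le_iff {f : M →ₗ[R] N →ₗ[R] P} {g : P →ₗ[R] Q →ₗ[R] S}
    {U : Submodule R M} {W : Submodule R N} {Z : Submodule R Q} {T : Submodule R S} :
    map₂ g (map₂ f U W) Z ≤ T ↔ ∀ u ∈ U, ∀ w ∈ W, ∀ z ∈ Z, g (f u w) z ∈ T := by
  rw [map₂_le]
  refine ⟨fun H u hu w hw z hz => H _ (apply_mem_map₂ _ hu hw) z hz, fun H x hx z hz => ?_⟩
  have hle : map₂ f U W ≤ T.comap (g.flip z) := map₂_le.2 fun u hu w hw => H u hu w hw z hz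
  exact hle hx

theorem mem_map₂_map₂_span_singleton_iff {f : M →ₗ[R] N →ₗ[R] P} {g : P →ₗ[R] Q →ₗ[R] S}
    {m : M} {D : Submodule R N} {q : Q} {x : S} :
    x ∈ map₂ g (map₂ f (span R {m}) D) (span R {q}) ↔ ∃ d ∈ D, g (f m d) q = x := by
  simp [map₂_span_singleton_eq_map_flip, map₂_span_singleton_eq_map]

end Submodule

open Submodule

theorem mem_span_setOf_rel_iff {K V : Type*} [Semiring K] [AddCommMonoid V] [Module K V]
    {R : V → V → Prop}
    (L1R : ∀ (v u z w : V), R v u → R z w → ∀ γ δ : K,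
      ∃ α β : K, R (γ • v + δ • z) (α • u + β • w))
    (hR0 : R 0 0) (Z : Submodule K V) {x : V} :
    x ∈ span K {v : V | ∃ z ∈ Z, R v z} ↔ ∃ z ∈ Z, R x z := by
  refine ⟨fun hx => ?_, fun hx => subset_span hx⟩
  induction hx using span_induction with
  | mem v hv => exact hv
  | zero => exact ⟨0, Z.zero_mem, hR0⟩
  | add a b _ _ ha hb =>
    obtain ⟨za, hza, hRa⟩ := ha
    obtain ⟨zb, hzb, hRb⟩ := hb
    obtain ⟨α, β, h⟩ := L1R a za b zb hRa hRb 1 1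
    exact ⟨α • za + β • zb, Z.add_mem (Z.smul_mem _ hza) (Z.smul_mem _ hzb), by simpa using h⟩
  | smul c a _ ha =>
    obtain ⟨za, hza, hRa⟩ := ha
    obtain ⟨α, β, h⟩ := L1R a za a za hRa hRa c 0
    exact ⟨α • za + β • za, Z.add_mem (Z.smul_mem _ hza) (Z.smul_mem _ hza), by simpa using h⟩

theorem leftComm_iff_pseudoLeftComm_general {K V : Type*} [Field K] [AddCommGroup V] [Module K V]
    (star : V →ₗ[K] V →ₗ[K] V) (R : V → V → Prop)
    (L1R : ∀ (v u z w : V), R v u → R z w → ∀ γ δ : K,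
      ∃ α β : K, R (γ • v + δ • z) (α • u + β • w))
    (L3R : ∀ x : V, R x 0 ↔ x = 0) :
    (∀ U W Z : Submodule K V,
        Submodule.span K (Set.image2 (fun a b => star a b)
          ((Submodule.span K (Set.image2 (fun a b => star a b) (U : Set V) (W : Set V))) : Set V)
          ((Submodule.span K {v : V | ∃ z ∈ Z, R v z}) : Set V)) ≤
        Submodule.span K (Set.image2 (fun a b => star a b)
          ((Submodule.span K (Set.image2 (fun a b => star a b) (U : Set V)
            ((Submodule.span K {v : V | ∃ z ∈ Z, R v z}) : Set V))) : Set V)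
          (W : Set V))) ↔
      (∀ u w z v : V, R v z → ∃ (α β : K) (v' : V),
        R v' (β • z) ∧ star (star u w) v = α • (star (star u v') w)) := by
  have hR0 : R 0 0 := (L3R 0).2 rfl
  simp only [← map₂_eq_span_image2, map₂_map₂_le_iff, mem_span_setOf_rel_iff L1R hR0]
  constructor
  · intro H u w z v hvz
    obtain ⟨v', hv', hv'_eq⟩ := mem_map₂_map₂_span_singleton_iff.1 <|
      H (K ∙ u) (K ∙ w) (K ∙ z) u (mem_span_singleton_self u) w (mem_span_singleton_self w) v
        ⟨z, mem_span_singleton_self z, hvz⟩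
    obtain ⟨z', hz', hRv'⟩ := (mem_span_setOf_rel_iff L1R hR0 _).1 hv'
    obtain ⟨β, rfl⟩ := mem_span_singleton.1 hz'
    exact ⟨1, β, v', hRv', by rw [one_smul, hv'_eq]⟩
  · rintro H U W Z u hu w hw v ⟨z, hz, hvz⟩
    obtain ⟨α, β, v', hv', hv_eq⟩ := H u w z v hvz
    rw [hv_eq]
    exact smul_mem _ _ <| apply_mem_map₂ _
      (apply_mem_map₂ _ hu (subset_span ⟨β • z, Z.smul_mem β hz, hv'⟩)) hw

/-- left-commutativity of fusion w.r.t. ◇ on subspaces iff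
pseudo left-commutativity of the modal K-algebra. -/
theorem leftComm_iff_pseudoLeftComm {K V : Type*} [Field K] [AddCommGroup V] [Module K V]
    (star : V →ₗ[K] V →ₗ[K] V) (R : V → V → Prop)
    (L1R : ∀ (v u z w : V), R v u → R z w → ∀ γ δ : K,
      ∃ α β : K, R (γ • v + δ • z) (α • u + β • w))
    (L2R : ∀ (t u v : V) (α β : K), R t (α • u + β • v) →
      ∃ (l m : K) (z w : V), R z u ∧ R w v ∧ l • z + m • w = t)
    (L3R : ∀ x : V, R x 0 ↔ x = 0) :
    (∀ U W Z : Submodule K V,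
        Submodule.span K (Set.image2 (fun a b => star a b)
          ((Submodule.span K (Set.image2 (fun a b => star a b) (U : Set V) (W : Set V))) : Set V)
          ((Submodule.span K {v : V | ∃ z ∈ Z, R v z}) : Set V)) ≤
        Submodule.span K (Set.image2 (fun a b => star a b)
          ((Submodule.span K (Set.image2 (fun a b => star a b) (U : Set V)
            ((Submodule.span K {v : V | ∃ z ∈ Z, R v z}) : Set V))) : Set V)
          (W : Set V))) ↔
      (∀ u w z v : V, R v z → ∃ (α β : K) (v' : V),
        R v' (β • z) ∧ star (star u w) v = α • (star (star u v') w)) :=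
  leftComm_iff_pseudoLeftComm_general star R L1R L3R
end

section
/- Let P be a finite residuated poset with n elements (a partial order with operations ⊗, \, / satisfying x ⊗ y ≤ z iff x ≤ z / y iff y ≤ x \ z). Then there is an n²-dimensional vector space V over 𝔽₂ equipped with a bilinear product ⋆, and a map h from P into the lattice of subspaces of V, such that h is an order embedding (p ≤ q iff h(p) ⊆ h(q)) and h(p ⊗ q) = h(p) ⊗ h(q), where on subspaces U ⊗ W := span{u ⋆ w | u ∈ U, w ∈ W}. -/
/-!
Index a basis of `𝔽₂^(P × P)` by pairs `(a, b)` and let `h p` be spanned by the basis vectors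
with `a ≤ p`. On basis vectors put `(a, b) ⋆ (c, d) := (b, d)` if `b ≤ a ⊗ c` and
`(a ⊗ c, d)` otherwise. Since `⊗` is monotone (a consequence of residuation), the first
coordinate of a product of generators of `h p` and `h q` stays below `p ⊗ q`; conversely
`(p, x) ⋆ (q, d) = (x, d)` for every `x ≤ p ⊗ q`, so the products of generators are exactly
the generators of `h (p ⊗ q)`. The second coordinate only supplies enough room for this.
-/

open Set Submodule

section Residuation

variable {P : Type*} [Preorder P] {mul ldiv rdiv : P → P → P}

theorem mul_le_mul_right_of_residuated (hr : ∀ x y z, mul x y ≤ z ↔ x ≤ rdiv z y)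
    {a p : P} (q : P) (hap : a ≤ p) : mul a q ≤ mul p q :=
  (hr a q _).2 (hap.trans ((hr p q _).1 le_rfl))

theorem mul_le_mul_left_of_residuated (hl : ∀ x y z, mul x y ≤ z ↔ y ≤ ldiv x z)
    (a : P) {b q : P} (hbq : b ≤ q) : mul a b ≤ mul a q :=
  (hl a b _).2 (hbq.trans ((hl a q _).1 le_rfl))

end Residuation

namespace Module.Basis

variable {ι R M : Type*} [CommSemiring R] [AddCommMonoid M] [Module R M]

theorem span_image_le_span_image_iff [Nontrivial R] (b : Basis ι R M) {s t : Set ι} :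
    span R (b '' s) ≤ span R (b '' t) ↔ s ⊆ t :=
  ⟨fun h _ hi => b.self_mem_span_image.1 (h (b.self_mem_span_image.2 hi)),
    fun h => span_mono (image_mono h)⟩

noncomputable def mulOfIndex (b : Basis ι R M) (F : ι → ι → ι) : M →ₗ[R] M →ₗ[R] M :=
  b.constr R fun i => b.constr R fun j => b (F i j)

@[simp]
theorem mulOfIndex_basis (b : Basis ι R M) (F : ι → ι → ι) (i j : ι) :
    b.mulOfIndex F (b i) (b j) = b (F i j) := by
  simp [mulOfIndex, constr_basis]

theorem span_image2_mulOfIndex (b : Basis ι R M) (F : ι → ι → ι) (s t : Set ι) :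
    span R (image2 (fun u w => b.mulOfIndex F u w) (span R (b '' s) : Set M) (span R (b '' t))) =
      span R (b '' image2 F s t) := by
  rw [← map₂_eq_span_image2, map₂_span_span, image2_image_left, image2_image_right,
    image_image2]
  simp only [mulOfIndex_basis]

end Module.Basis

section FusionIndex

variable {P : Type*} [Preorder P] [DecidableLE P]

def fusionIndex (mul : P → P → P) (i j : P × P) : P × P :=
  if i.2 ≤ mul i.1 j.1 then (i.2, j.2) else (mul i.1 j.1, j.2)

theorem image2_fusionIndex_preimage_fst_Iic {mul : P → P → P}
    (hmono : ∀ {a b p q}, a ≤ p → b ≤ q → mul a b ≤ mul p q) (p q : P) :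
    image2 (fusionIndex mul) (Prod.fst ⁻¹' Iic p) (Prod.fst ⁻¹' Iic q) =
      Prod.fst ⁻¹' Iic (mul p q) := by
  ext v
  constructor
  · rintro ⟨⟨a, b⟩, hap, ⟨c, d⟩, hcq, rfl⟩
    unfold fusionIndex
    split_ifs with hb
    exacts [hb.trans (hmono hap hcq), hmono hap hcq]
  · intro (hv : v.1 ≤ mul p q)
    exact ⟨(p, v.1), le_refl p, (q, v.2), le_refl q, by simp [fusionIndex, hv]⟩

end FusionIndex

theorem preimage_fst_Iic_subset_iff {P : Type*} [Preorder P] {p q : P} :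
    (Prod.fst ⁻¹' Iic p : Set (P × P)) ⊆ Prod.fst ⁻¹' Iic q ↔ p ≤ q :=
  ⟨fun h => h (show (p, p) ∈ Prod.fst ⁻¹' Iic p from le_refl p),
    fun h => preimage_mono (Iic_subset_Iic.2 h)⟩

/-- every finite residuated poset embeds into the lattice of subspaces of the
`n²`-dimensional vector space over `𝔽₂`, preserving order and fusion. -/
theorem finite_residuated_poset_embedding
    {P : Type*} [Fintype P] [PartialOrder P]
    (mul ldiv rdiv : P → P → P)
    (resid : ∀ x y z : P, (mul x y ≤ z ↔ x ≤ rdiv z y) ∧ (mul x y ≤ z ↔ y ≤ ldiv x z)) :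
    ∃ (star : (Fin (Fintype.card P) × Fin (Fintype.card P) → ZMod 2) →ₗ[ZMod 2]
        (Fin (Fintype.card P) × Fin (Fintype.card P) → ZMod 2) →ₗ[ZMod 2]
        (Fin (Fintype.card P) × Fin (Fintype.card P) → ZMod 2))
      (h : P → Submodule (ZMod 2) (Fin (Fintype.card P) × Fin (Fintype.card P) → ZMod 2)),
      (∀ p q : P, p ≤ q ↔ h p ≤ h q) ∧
      (∀ p q : P, h (mul p q) =
        Submodule.span (ZMod 2)
          (Set.image2 (fun u w => star u w)
            ((h p : Set (Fin (Fintype.card P) × Fin (Fintype.card P) → ZMod 2)))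
            ((h q : Set (Fin (Fintype.card P) × Fin (Fintype.card P) → ZMod 2))))) := by
  classical
  have hmono {a b p q : P} (hap : a ≤ p) (hbq : b ≤ q) : mul a b ≤ mul p q :=
    (mul_le_mul_right_of_residuated (fun x y z => (resid x y z).1) b hap).trans
      (mul_le_mul_left_of_residuated (fun x y z => (resid x y z).2) p hbq)
  let e := Fintype.equivFin P
  let b := (Pi.basisFun (ZMod 2) (Fin (Fintype.card P) × Fin (Fintype.card P))).reindex
    (e.prodCongr e).symm
  refine ⟨b.mulOfIndex (fusionIndex mul), fun p => span (ZMod 2) (b '' (Prod.fst ⁻¹' Iic p)),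
    fun p q => ?_, fun p q => ?_⟩
  · rw [b.span_image_le_span_image_iff, preimage_fst_Iic_subset_iff]
  · rw [b.span_image2_mulOfIndex, image2_fusionIndex_preimage_fst_Iic hmono]
end
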